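/- Let d ≥ 1 and let A ∈ ℝ^{d×d} have nonnegative entries. Then Tr((I + A)^d) ≥ d, and Tr((I + A)^d) = d if and only if A is acyclic. (This is the acyclicity characterization underlying the constraint h_binom(A) = Tr((I + A)^d) − d, which is the PST function with a_k = C(d,k).) -/

import Mathlib

open Matrix Finset

/-- `A` has a cycle of length `k`: there are indices `i₀, …, i_k` with `i₀ = i_k` and
`A (i_{ℓ-1}) (i_ℓ) > 0` for all `ℓ ∈ {1, …, k}`. -/
def hasCycle {d : ℕ} (A : Matrix (Fin d) (Fin d) ℝ) (k : ℕ) : Prop :=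
  ∃ p : ℕ → Fin d, p 0 = p k ∧ ∀ ℓ < k, 0 < A (p ℓ) (p (ℓ + 1))

/-- `A` is acyclic if it has no cycle of any length `k ≥ 1`. -/
def isAcyclic {d : ℕ} (A : Matrix (Fin d) (Fin d) ℝ) : Prop :=
  ∀ k, 1 ≤ k → ¬ hasCycle A k

section aux
variable {d : ℕ} (A : Matrix (Fin d) (Fin d) ℝ)

lemma pow_entry_nonneg (hA : ∀ i j, 0 ≤ A i j) : ∀ (k : ℕ) i j, 0 ≤ (A ^ k) i j := by
  intro k
  induction k with
  | zero =>
    intro i j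
    by_cases h : i = j <;> simp [Matrix.one_apply, h]
  | succ n ih =>
    intro i j
    rw [pow_succ, Matrix.mul_apply]
    exact Finset.sum_nonneg fun l _ => mul_nonneg (ih i l) (hA l j)

lemma path_pos (hA : ∀ i j, 0 ≤ A i j) :
    ∀ (k : ℕ) (p : ℕ → Fin d), (∀ ℓ < k, 0 < A (p ℓ) (p (ℓ + 1))) →
      0 < (A ^ k) (p 0) (p k) := by
  intro k
  induction k with
  | zero => intro p _; simp [Matrix.one_apply]
  | succ n ih =>
    intro p hp
    rw [pow_succ, Matrix.mul_apply]
    have h1 : 0 < (A ^ n) (p 0) (p n) := ih p fun ℓ hℓ => hp ℓ (Nat.lt_succ_of_lt hℓ)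
    have h2 : 0 < A (p n) (p (n + 1)) := hp n (Nat.lt_succ_self n)
    calc (0:ℝ) < (A ^ n) (p 0) (p n) * A (p n) (p (n + 1)) := mul_pos h1 h2
      _ ≤ _ := Finset.single_le_sum
        (f := fun l => (A ^ n) (p 0) l * A l (p (n + 1)))
        (fun l _ => mul_nonneg (pow_entry_nonneg A hA n _ _) (hA _ _)) (Finset.mem_univ (p n))

lemma pos_path (hA : ∀ i j, 0 ≤ A i j) :
    ∀ (k : ℕ) i j, 0 < (A ^ k) i j →
      ∃ p : ℕ → Fin d, p 0 = i ∧ p k = j ∧ ∀ ℓ < k, 0 < A (p ℓ) (p (ℓ + 1)) := by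
  intro k
  induction k with
  | zero =>
    intro i j h
    by_cases hij : i = j
    · exact ⟨fun _ => i, rfl, hij, fun ℓ hℓ => absurd hℓ (Nat.not_lt_zero ℓ)⟩
    · simp [Matrix.one_apply, hij] at h
  | succ n ih =>
    intro i j h
    rw [pow_succ, Matrix.mul_apply] at h
    have hex : ∃ l, 0 < (A ^ n) i l * A l j := by
      by_contra hc
      push_neg at hc
      exact absurd h (not_lt.2 (Finset.sum_nonpos fun l _ => hc l))
    obtain ⟨l, hl⟩ := hex
    have h1 : 0 < (A ^ n) i l ∧ 0 < A l j := by
      rcases mul_pos_iff.mp hl with h' | h'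
      · exact h'
      · exact absurd h'.2 (not_lt.2 (hA l j))
    obtain ⟨p, hp0, hpn, hp⟩ := ih i l h1.1
    refine ⟨fun ℓ => if ℓ = n + 1 then j else p ℓ, ?_, ?_, ?_⟩
    · simp [hp0]
    · simp
    · intro ℓ hℓ
      have hℓ' : ℓ ≠ n + 1 := by omega
      by_cases hc : ℓ = n
      · subst hc
        simp [hℓ', hpn, h1.2]
      · have : ℓ + 1 ≠ n + 1 := by omega
        simpa [hℓ', this, hc] using hp ℓ (by omega)

lemma shorten (k : ℕ) (hk : 1 ≤ k) (h : hasCycle A k) :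
    ∃ m, 1 ≤ m ∧ m ≤ d ∧ hasCycle A m := by
  by_cases hkd : k ≤ d
  · exact ⟨k, hk, hkd, h⟩
  · push_neg at hkd
    obtain ⟨p, hp0, hp⟩ := h
    have hcard : (Finset.range (d + 1)).card > (Finset.univ : Finset (Fin d)).card := by
      simp
    obtain ⟨a, ha, b, hb, hab, hpab⟩ :=
      Finset.exists_ne_map_eq_of_card_lt_of_maps_to hcard
        (fun x _ => Finset.mem_univ (p x))
    simp only [Finset.mem_range] at ha hb
    wlog hlt : a < b generalizing a b
    · exact this b a hab.symm hpab.symm hb ha (by omega)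
    refine ⟨b - a, by omega, by omega, fun ℓ => p (a + ℓ), ?_, ?_⟩
    · simp only [Nat.add_zero]
      rw [Nat.add_sub_cancel' (le_of_lt hlt), hpab]
    · intro ℓ hℓ
      have : a + ℓ < k := by omega
      have := hp (a + ℓ) this
      simpa [Nat.add_assoc] using this

lemma trace_pow_pos_iff (hA : ∀ i j, 0 ≤ A i j) (k : ℕ) :
    0 < Matrix.trace (A ^ k) ↔ hasCycle A k := by
  constructor
  · intro h
    rw [Matrix.trace] at h
    have : ∃ i, 0 < (A ^ k) i i := by
      by_contra hc
      push_neg at hc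
      exact absurd h (not_lt.2 (Finset.sum_nonpos fun i _ => hc i))
    obtain ⟨i, hi⟩ := this
    obtain ⟨p, hp0, hpk, hp⟩ := pos_path A hA k i i hi
    exact ⟨p, by rw [hp0, hpk], hp⟩
  · rintro ⟨p, hp0, hp⟩
    have hpos : 0 < (A ^ k) (p 0) (p k) := path_pos A hA k p hp
    rw [Matrix.trace]
    calc (0:ℝ) < (A ^ k) (p 0) (p 0) := by rw [hp0] at hpos ⊢; exact hpos
      _ ≤ _ := Finset.single_le_sum
        (f := fun i => (A ^ k) i i)
        (fun i _ => pow_entry_nonneg A hA k i i) (Finset.mem_univ (p 0))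

lemma trace_key (hd : 1 ≤ d) :
    Matrix.trace ((1 + A) ^ d) =
      (d : ℝ) + ∑ m ∈ Finset.range d, (d.choose (m + 1) : ℝ) * Matrix.trace (A ^ (m + 1)) := by
  rw [add_comm, (Commute.one_right A).add_pow]
  have : ∀ m ∈ Finset.range (d + 1),
      A ^ m * 1 ^ (d - m) * (d.choose m : Matrix (Fin d) (Fin d) ℝ)
        = (d.choose m) • A ^ m := by
    intro m _
    rw [one_pow, mul_one]
    rw [show ((d.choose m : ℕ) : Matrix (Fin d) (Fin d) ℝ) = (d.choose m) • (1 : Matrix (Fin d) (Fin d) ℝ) by simp]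
    rw [mul_smul_comm, mul_one]
  rw [Finset.sum_congr rfl this, Matrix.trace_sum]
  simp only [Matrix.trace_smul]
  simp only [nsmul_eq_mul]
  rw [Finset.sum_range_succ', pow_zero, Matrix.trace_one]
  simp [add_comm]

end aux

theorem trace_one_add_pow_ge_and_eq_iff_isAcyclic
    {d : ℕ} (hd : 1 ≤ d) (A : Matrix (Fin d) (Fin d) ℝ)
    (hA : ∀ i j, 0 ≤ A i j) :
    (d : ℝ) ≤ Matrix.trace ((1 + A) ^ d) ∧
      (Matrix.trace ((1 + A) ^ d) = (d : ℝ) ↔ isAcyclic A) := by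
  have htr : ∀ k, 0 ≤ Matrix.trace (A ^ k) := fun k =>
    Finset.sum_nonneg fun i _ => pow_entry_nonneg A hA k i i
  have hterm : ∀ m ∈ Finset.range d,
      0 ≤ (d.choose (m + 1) : ℝ) * Matrix.trace (A ^ (m + 1)) := fun m _ =>
    mul_nonneg (by positivity) (htr _)
  have hsum : 0 ≤ ∑ m ∈ Finset.range d, (d.choose (m + 1) : ℝ) * Matrix.trace (A ^ (m + 1)) :=
    Finset.sum_nonneg hterm
  rw [trace_key A hd]
  constructor
  · linarith
  · rw [show ((d:ℝ) + ∑ m ∈ Finset.range d, (d.choose (m + 1) : ℝ) * Matrix.trace (A ^ (m + 1)) = (d:ℝ)) ↔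
      (∑ m ∈ Finset.range d, (d.choose (m + 1) : ℝ) * Matrix.trace (A ^ (m + 1)) = 0) by
        constructor <;> intro h <;> linarith]
    rw [Finset.sum_eq_zero_iff_of_nonneg hterm]
    constructor
    · intro h k hk hcyc
      obtain ⟨m, hm1, hmd, hcyc'⟩ := shorten A k hk hcyc
      have hpos : 0 < Matrix.trace (A ^ m) := (trace_pow_pos_iff A hA m).mpr hcyc'
      have hmem : m - 1 ∈ Finset.range d := Finset.mem_range.mpr (by omega)
      have := h (m - 1) hmem
      have hch : 0 < (d.choose (m - 1 + 1) : ℝ) := by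
        have : 0 < d.choose (m - 1 + 1) := Nat.choose_pos (by omega)
        exact_mod_cast this
      have hm' : m - 1 + 1 = m := by omega
      rw [hm'] at this hch
      nlinarith
    · intro hac m _
      have : ¬ 0 < Matrix.trace (A ^ (m + 1)) := fun hpos =>
        hac (m + 1) (by omega) ((trace_pow_pos_iff A hA (m + 1)).mp hpos)
      have : Matrix.trace (A ^ (m + 1)) = 0 := le_antisymm (not_lt.1 this) (htr _)
      rw [this, mul_zero]
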